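/- L^p-integrability of the symbol h_α: let α > 0 and 1 ≤ p < ∞. Then ∫_{ℝ²} |h_α(ξ₁,ξ₂)|^p d(ξ₁,ξ₂) < ∞ if and only if 1/2 + 3/(2(1+α)) < p < 2. -/

import Mathlib

/-! By Tonelli, `|h_α|^p` is integrable on `ℝ²` iff almost every vertical section is integrable
and the section integrals are integrable in `x`. For `x ≠ 0`, with `A = x² + |x|^{α+2}`, the
substitution `y = √A t` gives `∫ |h_α(x,y)|^p dy = C_p |x|^{1-p} (1 + |x|^α)^{1/2-p}`, where
`C_p = ∫ (1 + t²)^{-p} dt` is finite and positive for `p > 1/2`. This profile is comparable to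
`x^{1-p}` on `(0, 1]` and to `x^{1-p+α(1/2-p)}` on `(1, ∞)`, which are integrable exactly when
`p < 2` and `p > 1/2 + 3/(2(1+α))` respectively. -/

open MeasureTheory

noncomputable section

/-- The symbol `h_α(ξ) = ξ₁ / (ξ₁² + ξ₂² + |ξ₁|^{α+2})` (with value `0` at the origin,
which is the value Lean's division by zero gives). -/
def hSymb (α : ℝ) (ξ : ℝ × ℝ) : ℝ :=
  ξ.1 / (ξ.1 ^ 2 + ξ.2 ^ 2 + |ξ.1| ^ (α + 2))

open Set Filter Asymptotics

section Comparison

variable {X E F : Type*} [MeasurableSpace X] [NormedAddCommGroup E] [NormedAddCommGroup F]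
  {μ : Measure X} {s : Set X} {f : X → E} {g : X → F}

theorem Asymptotics.IsBigO.integrableOn (hs : MeasurableSet s) (hfg : f =O[𝓟 s] g)
    (hf : AEStronglyMeasurable f (μ.restrict s)) (hg : IntegrableOn g s μ) :
    IntegrableOn f s μ := by
  obtain ⟨c, hc⟩ := isBigO_principal.1 hfg
  exact (hg.norm.const_mul c).mono' hf ((ae_restrict_iff' hs).2 (.of_forall hc))

theorem Asymptotics.IsTheta.integrableOn_iff (hs : MeasurableSet s) (hfg : f =Θ[𝓟 s] g)
    (hf : AEStronglyMeasurable f (μ.restrict s)) (hg : AEStronglyMeasurable g (μ.restrict s)) :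
    IntegrableOn f s μ ↔ IntegrableOn g s μ :=
  ⟨hfg.2.integrableOn hs hg, hfg.1.integrableOn hs hf⟩

end Comparison

theorem integrable_comp_abs_iff {E : Type*} [NormedAddCommGroup E] {f : ℝ → E} :
    Integrable (fun x ↦ f |x|) ↔ IntegrableOn f (Ioi 0) := by
  have hIoi : IntegrableOn (fun x ↦ f |x|) (Ioi 0) ↔ IntegrableOn f (Ioi 0) :=
    integrableOn_congr_fun (fun x hx ↦ by rw [abs_of_pos hx]) measurableSet_Ioi
  have hIic : IntegrableOn (fun x ↦ f |x|) (Iic 0) ↔ IntegrableOn (fun x ↦ f |x|) (Ioi 0) := by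
    have hneg : MeasurableEmbedding (fun x : ℝ ↦ -x) := (Homeomorph.neg ℝ).measurableEmbedding
    conv_lhs => rw [← Measure.map_neg_eq_self (volume : Measure ℝ), hneg.integrableOn_map_iff]
    simp_rw [Function.comp_def, abs_neg, neg_preimage, neg_Iic, neg_zero]
    exact integrableOn_Ici_iff_integrableOn_Ioi
  rw [← integrableOn_univ, ← Iic_union_Ioi (a := (0 : ℝ)), integrableOn_union, hIic, hIoi,
    and_self]

section SquareIntegrals

variable {p : ℝ}

theorem integrable_one_add_sq_rpow_neg (hp : 1 / 2 < p) :
    Integrable fun t : ℝ ↦ (1 + t ^ 2) ^ (-p) := by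
  have := integrable_rpow_neg_one_add_norm_sq (E := ℝ) (μ := volume) (r := 2 * p)
    (by rw [Module.finrank_self, Nat.cast_one]; linarith)
  simpa [Real.norm_eq_abs, sq_abs, neg_div] using this

theorem integral_one_add_sq_rpow_neg_pos (hp : 1 / 2 < p) :
    0 < ∫ t : ℝ, (1 + t ^ 2) ^ (-p) :=
  integral_pos_of_integrable_nonneg_nonzero (x := 0)
    (.rpow_const (by fun_prop) fun t ↦ .inl (by positivity))
    (integrable_one_add_sq_rpow_neg hp) (fun t ↦ by positivity) (by simp)

theorem add_sq_rpow_neg_eq_mul {A : ℝ} (hA : 0 < A) (y : ℝ) :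
    (A + y ^ 2) ^ (-p) = A ^ (-p) * (1 + (y / √A) ^ 2) ^ (-p) := by
  rw [← Real.mul_rpow hA.le (by positivity), div_pow, Real.sq_sqrt hA.le, mul_add,
    mul_div_cancel₀ _ hA.ne', mul_one]

theorem integrable_add_sq_rpow_neg (hp : 1 / 2 < p) {A : ℝ} (hA : 0 < A) :
    Integrable fun y : ℝ ↦ (A + y ^ 2) ^ (-p) := by
  simp_rw [add_sq_rpow_neg_eq_mul hA]
  exact ((integrable_comp_div_iff (fun t : ℝ ↦ (1 + t ^ 2) ^ (-p))
    (Real.sqrt_pos.2 hA).ne').2 (integrable_one_add_sq_rpow_neg hp)).const_mul _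

theorem integral_add_sq_rpow_neg {A : ℝ} (hA : 0 < A) :
    ∫ y : ℝ, (A + y ^ 2) ^ (-p) = A ^ (1 / 2 - p) * ∫ t : ℝ, (1 + t ^ 2) ^ (-p) := by
  simp_rw [add_sq_rpow_neg_eq_mul hA]
  rw [integral_const_mul, Measure.integral_comp_div (fun t : ℝ ↦ (1 + t ^ 2) ^ (-p)),
    abs_of_pos (Real.sqrt_pos.2 hA), smul_eq_mul, ← mul_assoc, Real.sqrt_eq_rpow,
    ← Real.rpow_add hA, neg_add_eq_sub]

end SquareIntegrals

def hSymbProfile (α p x : ℝ) : ℝ := x ^ (1 - p) * (1 + x ^ α) ^ (1 / 2 - p)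

section Profile

variable {α : ℝ} (p : ℝ)

theorem hSymbProfile_isTheta_Ioc (hα : 0 ≤ α) :
    hSymbProfile α p =Θ[𝓟 (Ioc 0 1)] fun x ↦ x ^ (1 - p) := by
  have hbase : (fun x : ℝ ↦ 1 + x ^ α) =Θ[𝓟 (Ioc 0 1)] fun _ ↦ (1 : ℝ) := by
    refine ⟨isBigO_principal.2 ⟨2, fun x hx ↦ ?_⟩, isBigO_principal.2 ⟨1, fun x hx ↦ ?_⟩⟩
    all_goals
      have h0 := Real.rpow_nonneg hx.1.le α
      have h1 := Real.rpow_le_one hx.1.le hx.2 hα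
      rw [norm_one, Real.norm_of_nonneg (by positivity)]
      linarith
  have := (isTheta_refl (fun x : ℝ ↦ x ^ (1 - p)) _).mul (hbase.rpow (r := 1 / 2 - p)
    (eventually_principal.2 fun x hx ↦ by have := hx.1; positivity)
    (.of_forall fun _ ↦ zero_le_one))
  simp only [Real.one_rpow, mul_one] at this
  exact this

theorem hSymbProfile_isTheta_Ioi (hα : 0 ≤ α) :
    hSymbProfile α p =Θ[𝓟 (Ioi 1)] fun x ↦ x ^ (1 - p + α * (1 / 2 - p)) := by
  have hbase : (fun x : ℝ ↦ 1 + x ^ α) =Θ[𝓟 (Ioi 1)] fun x ↦ x ^ α := by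
    refine ⟨isBigO_principal.2 ⟨2, fun x hx ↦ ?_⟩, isBigO_principal.2 ⟨1, fun x hx ↦ ?_⟩⟩
    all_goals
      have h1 := Real.one_le_rpow (le_of_lt hx) hα
      rw [Real.norm_of_nonneg (by positivity), Real.norm_of_nonneg (by positivity)]
      linarith
  have := (isTheta_refl (fun x : ℝ ↦ x ^ (1 - p)) _).mul (hbase.rpow (r := 1 / 2 - p)
    (eventually_principal.2 fun x (hx : 1 < x) ↦ by positivity)
    (eventually_principal.2 fun x (hx : 1 < x) ↦ by positivity))
  refine this.trans_eventuallyEq (eventually_principal.2 fun x (hx : 1 < x) ↦ ?_)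
  have hx0 : 0 < x := zero_lt_one.trans hx
  dsimp only
  rw [← Real.rpow_mul hx0.le, ← Real.rpow_add hx0]

theorem integrableOn_hSymbProfile_Ioc_iff (hα : 0 ≤ α) :
    IntegrableOn (hSymbProfile α p) (Ioc 0 1) ↔ p < 2 := by
  rw [(hSymbProfile_isTheta_Ioc p hα).integrableOn_iff measurableSet_Ioc
    (by unfold hSymbProfile; fun_prop) (by fun_prop), integrableOn_Ioc_iff_integrableOn_Ioo,
    intervalIntegral.integrableOn_Ioo_rpow_iff one_pos]
  constructor <;> intro h <;> linarith

theorem integrableOn_hSymbProfile_Ioi_iff (hα : 0 ≤ α) :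
    IntegrableOn (hSymbProfile α p) (Ioi 1) ↔ 1 - p + α * (1 / 2 - p) < -1 := by
  rw [(hSymbProfile_isTheta_Ioi p hα).integrableOn_iff measurableSet_Ioi
    (by unfold hSymbProfile; fun_prop) (by fun_prop), integrableOn_Ioi_rpow_iff one_pos]

theorem integrableOn_hSymbProfile_iff (hα : 0 ≤ α) :
    IntegrableOn (hSymbProfile α p) (Ioi 0) ↔ 1 / 2 + 3 / (2 * (1 + α)) < p ∧ p < 2 := by
  rw [← Ioc_union_Ioi_eq_Ioi zero_le_one, integrableOn_union,
    integrableOn_hSymbProfile_Ioc_iff p hα, integrableOn_hSymbProfile_Ioi_iff p hα, and_comm]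
  have : 1 - p + α * (1 / 2 - p) < -1 ↔ 1 / 2 + 3 / (2 * (1 + α)) < p := by
    rw [iff_comm, ← lt_sub_iff_add_lt', div_lt_iff₀ (by positivity)]
    constructor <;> intro h <;> linarith
  rw [this]

end Profile

section Sections

variable {α p x : ℝ}

theorem abs_hSymb_rpow_eq (hx : x ≠ 0) (y : ℝ) :
    |hSymb α (x, y)| ^ p = |x| ^ p * ((x ^ 2 + |x| ^ (α + 2)) + y ^ 2) ^ (-p) := by
  have hD : 0 < x ^ 2 + |x| ^ (α + 2) + y ^ 2 := by positivity
  rw [hSymb, add_right_comm, abs_div, abs_of_pos hD, Real.div_rpow (abs_nonneg x) hD.le,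
    Real.rpow_neg hD.le, div_eq_mul_inv]

theorem sq_add_abs_rpow_add_two_eq_mul (hx : x ≠ 0) :
    x ^ 2 + |x| ^ (α + 2) = |x| ^ (2 : ℝ) * (1 + |x| ^ α) := by
  rw [Real.rpow_add (abs_pos.2 hx), Real.rpow_two, sq_abs]
  ring

theorem integrable_abs_hSymb_rpow_section (hp : 1 / 2 < p) (hx : x ≠ 0) :
    Integrable fun y ↦ |hSymb α (x, y)| ^ p := by
  simp_rw [abs_hSymb_rpow_eq hx]
  exact (integrable_add_sq_rpow_neg hp (by positivity)).const_mul _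

theorem integral_abs_hSymb_rpow_section (hx : x ≠ 0) :
    ∫ y, |hSymb α (x, y)| ^ p = (∫ t : ℝ, (1 + t ^ 2) ^ (-p)) * hSymbProfile α p |x| := by
  have hxa : 0 < |x| := abs_pos.2 hx
  simp_rw [abs_hSymb_rpow_eq hx]
  rw [integral_const_mul, integral_add_sq_rpow_neg (by positivity),
    sq_add_abs_rpow_add_two_eq_mul hx, Real.mul_rpow (by positivity) (by positivity),
    ← Real.rpow_mul hxa.le, hSymbProfile, show 1 - p = p + 2 * (1 / 2 - p) by ring,
    Real.rpow_add hxa]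
  ring

end Sections

/-- **`L^p`-integrability of the symbol `h_α`** (Lemma 3.8 (a)): for `α > 0` and
`1 ≤ p < ∞`, `h_α ∈ L^p(ℝ²)` if and only if `1/2 + 3/(2(1+α)) < p < 2`. -/
theorem hSymb_memLp_iff (α : ℝ) (hα : 0 < α) (p : ℝ) (hp : 1 ≤ p) :
    Integrable (fun ξ : ℝ × ℝ => |hSymb α ξ| ^ p) (volume : Measure (ℝ × ℝ)) ↔
      (1 / 2 + 3 / (2 * (1 + α)) < p ∧ p < 2) := by
  have hp' : 1 / 2 < p := by linarith
  have hmeas : Measurable fun ξ : ℝ × ℝ ↦ |hSymb α ξ| ^ p := by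
    unfold hSymb; fun_prop
  have hmarg : (fun x ↦ ∫ y, ‖|hSymb α (x, y)| ^ p‖) =ᵐ[volume]
      fun x ↦ (∫ t : ℝ, (1 + t ^ 2) ^ (-p)) * hSymbProfile α p |x| := by
    filter_upwards [Measure.ae_ne volume 0] with x hx
    simp_rw [Real.norm_of_nonneg (by positivity : 0 ≤ |hSymb α (x, _)| ^ p)]
    exact integral_abs_hSymb_rpow_section hx
  rw [Measure.volume_eq_prod, integrable_prod_iff hmeas.aestronglyMeasurable,
    integrable_congr hmarg,
    integrable_const_mul_iff (integral_one_add_sq_rpow_neg_pos hp').ne'.isUnit,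
    integrable_comp_abs_iff, integrableOn_hSymbProfile_iff p hα.le, and_iff_right_iff_imp]
  refine fun _ ↦ ?_
  filter_upwards [Measure.ae_ne volume 0] with x hx
  exact integrable_abs_hSymb_rpow_section hp' hx
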